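/- (Nonnegative adversarial cost linearizes the regularizer at short range.) Let n ∈ ℕ, μ, ν ∈ ℝⁿ histograms, c₀ ∈ ℝ^{n×n}, ε > 0, and for each i,j let R_{ij} : ℝ → ℝ be convex and differentiable, with convex conjugate R_{ij}*(y) = sup_{x∈ℝ} (xy − R_{ij}(x)); assume R_{ij}* is finite and differentiable at −(c₀)_{ij}/ε, with derivative t_{ij} = (R_{ij}*)'(−(c₀)_{ij}/ε). Define R̂_{ij}(x) = R_{ij}(x) if x ≥ t_{ij}, and R̂_{ij}(x) = (−(c₀)_{ij}/ε)·x − R_{ij}*(−(c₀)_{ij}/ε) otherwise. Then sup_{c ∈ ℝ^{n×n}, c ≥ 0 entrywise} [ OT_c(μ,ν) − ε Σ_{ij} R_{ij}*((c_{ij} − (c₀)_{ij})/ε) ] = min_{π∈Π(μ,ν)} [ ⟨c₀,π⟩ + ε Σ_{ij} R̂_{ij}(π_{ij}) ], and each R̂_{ij} is continuous and convex. -/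

import Mathlib

open scoped BigOperators

/-- `μ` is a histogram: nonnegative entries summing to `1`. -/
def IsHistogram {n : ℕ} (μ : Fin n → ℝ) : Prop := (∀ i, 0 ≤ μ i) ∧ ∑ i, μ i = 1

/-- The transportation polytope `Π(μ,ν)`: matrices with nonnegative entries,
row sums `μ` and column sums `ν`. -/
def DCouplings {n : ℕ} (μ ν : Fin n → ℝ) : Set (Fin n → Fin n → ℝ) :=
  {π | (∀ i j, 0 ≤ π i j) ∧ (∀ i, ∑ j, π i j = μ i) ∧ (∀ j, ∑ i, π i j = ν j)}

/-- Frobenius inner product `⟨c, π⟩`. -/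
def frob {n : ℕ} (c π : Fin n → Fin n → ℝ) : ℝ := ∑ i, ∑ j, c i j * π i j

/-- Discrete optimal transport cost `OT_c(μ,ν)`. -/
noncomputable def dOT {n : ℕ} (c : Fin n → Fin n → ℝ) (μ ν : Fin n → ℝ) : ℝ :=
  ⨅ π : DCouplings μ ν, frob c π.1

/-- Convex conjugate of `G : ℝ^{n×n} → ℝ ∪ {+∞}`. -/
noncomputable def dconj {n : ℕ} (G : (Fin n → Fin n → ℝ) → EReal)
    (c : Fin n → Fin n → ℝ) : EReal :=
  ⨆ π : Fin n → Fin n → ℝ, ((frob c π : ℝ) : EReal) - G π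

/-- Convex conjugate `f*` of a scalar function `f : ℝ → ℝ`. -/
noncomputable def rconj (f : ℝ → ℝ) (y : ℝ) : EReal :=
  ⨆ x : ℝ, ((x * y - f x : ℝ) : EReal)

/-- Short-range linearization `R̂` of a scalar regularizer `f`:
equal to `f` above the threshold `t` and affine (slope `y₀`) below it. -/
noncomputable def rhat (f : ℝ → ℝ) (y₀ t : ℝ) (x : ℝ) : ℝ :=
  if t ≤ x then f x else y₀ * x - (rconj f y₀).toReal

/-!
Let `π⋆` minimize the linearized objective `G(π) = ⟨c₀, π⟩ + ε Σ R̂ᵢⱼ(πᵢⱼ)` over the compact set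
of couplings, and write `y₀ = -c₀/ε`. Below `t`, `R̂` is the tangent line `p ↦ y₀ p - R*(y₀)` of `R`
at `t` (Fenchel equality `R*(y₀) = t y₀ - R(t)` together with `R'(t) = y₀`), while `R*` lies above
its own tangent line `R*(y₀) + t (y - y₀)`. Hence `p y - R̂(p) ≤ R*(y)` whenever `y ≥ y₀`, which
bounds the value of every nonnegative cost by `G(π⋆)`. Conversely, `R̂` is differentiable with
nondecreasing derivative `R̂' ≥ y₀`, so `c⋆ = c₀ + ε R̂'(π⋆)` is a nonnegative cost; first-order
optimality of `π⋆` makes it an optimal plan for `c⋆`, and the Fenchel equality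
`R*(R̂'(p)) = p R̂'(p) - R̂(p)` shows that `c⋆` attains `G(π⋆)`.
-/

lemma EReal.coe_finset_sum {ι : Type*} (s : Finset ι) (g : ι → ℝ) :
    ((∑ i ∈ s, g i : ℝ) : EReal) = ∑ i ∈ s, (g i : EReal) :=
  map_sum ({ toFun := (↑), map_zero' := EReal.coe_zero, map_add' := EReal.coe_add } : ℝ →+ EReal)
    g s

lemma nonneg_of_hasDerivAt_of_isMinOn_Icc {φ : ℝ → ℝ} {D : ℝ} (hφ : HasDerivAt φ D 0)
    (hmin : IsMinOn φ (Set.Icc 0 1) 0) : 0 ≤ D := by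
  have hcone : (1 : ℝ) ∈ posTangentConeAt (Set.Icc 0 1) 0 :=
    mem_posTangentConeAt_of_segment_subset (by rw [zero_add, segment_eq_Icc zero_le_one])
  simpa using hmin.localize.hasFDerivWithinAt_nonneg hφ.hasFDerivAt.hasFDerivWithinAt hcone

lemma ConvexOn.add_deriv_mul_sub_le {f : ℝ → ℝ} (hconv : ConvexOn ℝ Set.univ f)
    (hdiff : Differentiable ℝ f) (x z : ℝ) : f x + deriv f x * (z - x) ≤ f z := by
  rcases lt_trichotomy x z with h | rfl | h
  · have := hconv.deriv_le_slope (Set.mem_univ x) (Set.mem_univ z) h (hdiff x)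
    rw [slope_def_field, le_div_iff₀ (sub_pos.2 h)] at this
    linarith
  · simp
  · have := hconv.slope_le_deriv (Set.mem_univ z) (Set.mem_univ x) h (hdiff x)
    rw [slope_def_field, div_le_iff₀ (sub_pos.2 h)] at this
    linarith

lemma le_rconj (f : ℝ → ℝ) (x y : ℝ) : ((x * y - f x : ℝ) : EReal) ≤ rconj f y :=
  le_iSup (fun x : ℝ => ((x * y - f x : ℝ) : EReal)) x

lemma rconj_ne_bot (f : ℝ → ℝ) (y : ℝ) : rconj f y ≠ ⊥ :=
  ne_bot_of_le_ne_bot (EReal.coe_ne_bot _) (le_rconj f 0 y)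

section rconj

variable {f : ℝ → ℝ}

lemma coe_toReal_rconj {y : ℝ} (h : rconj f y ≠ ⊤) : ((rconj f y).toReal : EReal) = rconj f y :=
  EReal.coe_toReal h (rconj_ne_bot f y)

lemma mul_sub_le_toReal_rconj {y : ℝ} (h : rconj f y ≠ ⊤) (x : ℝ) :
    x * y - f x ≤ (rconj f y).toReal := by
  rw [← EReal.coe_le_coe_iff, coe_toReal_rconj h]
  exact le_rconj f x y

lemma rconj_deriv (hconv : ConvexOn ℝ Set.univ f) (hdiff : Differentiable ℝ f) (x : ℝ) :
    rconj f (deriv f x) = ((x * deriv f x - f x : ℝ) : EReal) := by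
  refine le_antisymm (iSup_le fun z => ?_) (le_rconj f x (deriv f x))
  rw [EReal.coe_le_coe_iff]
  linarith [hconv.add_deriv_mul_sub_le hdiff x z]

lemma toReal_rconj_add_mul_sub_le {y₁ y₂ : ℝ} (h₁ : rconj f y₁ ≠ ⊤) (h₂ : rconj f y₂ ≠ ⊤)
    {s : ℝ} (hs : s ∈ Set.Icc (0 : ℝ) 1) :
    (rconj f (y₁ + s * (y₂ - y₁))).toReal
      ≤ (1 - s) * (rconj f y₁).toReal + s * (rconj f y₂).toReal := by
  have hle : rconj f (y₁ + s * (y₂ - y₁))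
      ≤ (((1 - s) * (rconj f y₁).toReal + s * (rconj f y₂).toReal : ℝ) : EReal) := by
    refine iSup_le fun x => EReal.coe_le_coe_iff.2 ?_
    have h₁x := mul_le_mul_of_nonneg_left (mul_sub_le_toReal_rconj h₁ x) (sub_nonneg.2 hs.2)
    have h₂x := mul_le_mul_of_nonneg_left (mul_sub_le_toReal_rconj h₂ x) hs.1
    linarith
  have := EReal.toReal_le_toReal hle (rconj_ne_bot _ _) (EReal.coe_ne_top _)
  rwa [EReal.toReal_coe] at this

lemma toReal_rconj_add_le_rconj {y₀ t : ℝ} (hfin : rconj f y₀ ≠ ⊤)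
    (ht : HasDerivAt (fun y => (rconj f y).toReal) t y₀) (y : ℝ) :
    (((rconj f y₀).toReal + t * (y - y₀) : ℝ) : EReal) ≤ rconj f y := by
  by_cases hy : rconj f y = ⊤
  · simp [hy]
  set A := (rconj f y₀).toReal
  set B := (rconj f y).toReal
  have hline : HasDerivAt (fun s : ℝ => y₀ + s * (y - y₀)) (y - y₀) 0 := by
    simpa using ((hasDerivAt_id (0 : ℝ)).mul_const (y - y₀)).const_add y₀
  have hφ : HasDerivAt (fun s => A + s * (B - A) - (rconj f (y₀ + s * (y - y₀))).toReal)
      (B - A - t * (y - y₀)) 0 := by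
    have hchord : HasDerivAt (fun s : ℝ => A + s * (B - A)) (B - A) 0 := by
      simpa using ((hasDerivAt_id (0 : ℝ)).mul_const (B - A)).const_add A
    exact hchord.sub (ht.comp_of_eq (0 : ℝ) hline (by simp))
  have hmin : IsMinOn (fun s => A + s * (B - A) - (rconj f (y₀ + s * (y - y₀))).toReal)
      (Set.Icc 0 1) 0 := fun s hs => by
    have := toReal_rconj_add_mul_sub_le hfin hy hs
    simp only [Set.mem_ofPred_eq, zero_mul, add_zero]
    linarith
  rw [← coe_toReal_rconj hy, EReal.coe_le_coe_iff]
  linarith [nonneg_of_hasDerivAt_of_isMinOn_Icc hφ hmin]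

lemma mul_sub_rhat_le_rconj {y₀ t : ℝ} (hfin : rconj f y₀ ≠ ⊤)
    (ht : HasDerivAt (fun y => (rconj f y).toReal) t y₀) {y : ℝ} (hy : y₀ ≤ y) (p : ℝ) :
    ((p * y - rhat f y₀ t p : ℝ) : EReal) ≤ rconj f y := by
  unfold rhat
  split_ifs with hp
  · exact le_rconj f p y
  · refine le_trans ?_ (toReal_rconj_add_le_rconj hfin ht y)
    rw [EReal.coe_le_coe_iff]
    nlinarith [mul_le_mul_of_nonneg_right (not_le.1 hp).le (sub_nonneg.2 hy)]

end rconj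

structure ConjHasDerivAt (f : ℝ → ℝ) (t y₀ : ℝ) : Prop where
  convexOn : ConvexOn ℝ Set.univ f
  differentiable : Differentiable ℝ f
  rconj_ne_top : rconj f y₀ ≠ ⊤
  hasDerivAt : HasDerivAt (fun y => (rconj f y).toReal) t y₀

noncomputable def rhatDeriv (f : ℝ → ℝ) (y₀ t x : ℝ) : ℝ :=
  if t ≤ x then deriv f x else y₀

namespace ConjHasDerivAt

variable {f : ℝ → ℝ} {y₀ t : ℝ}

lemma toReal_rconj_eq (h : ConjHasDerivAt f t y₀) : (rconj f y₀).toReal = t * y₀ - f t := by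
  refine le_antisymm ?_ (mul_sub_le_toReal_rconj h.rconj_ne_top t)
  have := toReal_rconj_add_le_rconj h.rconj_ne_top h.hasDerivAt (deriv f t)
  rw [rconj_deriv h.convexOn h.differentiable t, EReal.coe_le_coe_iff] at this
  linarith

lemma deriv_eq (h : ConjHasDerivAt f t y₀) : deriv f t = y₀ := by
  have hmax : IsMaxOn (fun x => x * y₀ - f x) Set.univ t := fun x _ => by
    have := mul_sub_le_toReal_rconj h.rconj_ne_top x
    rw [h.toReal_rconj_eq] at this
    exact this
  have hd : HasDerivAt (fun x => x * y₀ - f x) (y₀ - deriv f t) t := by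
    simpa using ((hasDerivAt_id t).mul_const y₀).fun_sub (h.differentiable t).hasDerivAt
  linarith [(hmax.isLocalMax Filter.univ_mem).hasDerivAt_eq_zero hd]

lemma rhat_of_le (h : ConjHasDerivAt f t y₀) {x : ℝ} (hx : x ≤ t) :
    rhat f y₀ t x = y₀ * x - (rconj f y₀).toReal := by
  unfold rhat
  split_ifs with hx'
  · rw [le_antisymm hx hx', h.toReal_rconj_eq]
    ring
  · rfl

lemma rhatDeriv_eq (h : ConjHasDerivAt f t y₀) (x : ℝ) :
    rhatDeriv f y₀ t x = deriv f (max x t) := by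
  unfold rhatDeriv
  split_ifs with hx
  · rw [max_eq_left hx]
  · rw [max_eq_right (not_le.1 hx).le, h.deriv_eq]

lemma monotone_rhatDeriv (h : ConjHasDerivAt f t y₀) : Monotone (rhatDeriv f y₀ t) := by
  have hmono : Monotone (deriv f) :=
    monotoneOn_univ.1 (h.convexOn.monotoneOn_deriv fun x _ => h.differentiable x)
  intro a b hab
  rw [h.rhatDeriv_eq, h.rhatDeriv_eq]
  exact hmono (max_le_max_right t hab)

lemma le_rhatDeriv (h : ConjHasDerivAt f t y₀) (x : ℝ) : y₀ ≤ rhatDeriv f y₀ t x := by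
  calc y₀ = rhatDeriv f y₀ t (min x t) := by
        rw [h.rhatDeriv_eq, max_eq_right (min_le_right x t), h.deriv_eq]
    _ ≤ rhatDeriv f y₀ t x := h.monotone_rhatDeriv (min_le_left x t)

lemma hasDerivAt_rhat (h : ConjHasDerivAt f t y₀) (x : ℝ) :
    HasDerivAt (rhat f y₀ t) (rhatDeriv f y₀ t x) x := by
  have haffine : ∀ z, HasDerivAt (fun w => y₀ * w - (rconj f y₀).toReal) y₀ z := fun z => by
    simpa using ((hasDerivAt_id z).const_mul y₀).sub_const (rconj f y₀).toReal
  rcases lt_trichotomy x t with hx | rfl | hx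
  · rw [rhatDeriv, if_neg (not_le.2 hx)]
    refine (haffine x).congr_of_eventuallyEq ?_
    filter_upwards [eventually_lt_nhds hx] with z hz using h.rhat_of_le hz.le
  · rw [rhatDeriv, if_pos le_rfl]
    have hleft : HasDerivWithinAt (rhat f y₀ x) (deriv f x) (Set.Iic x) x := by
      rw [h.deriv_eq]
      exact (haffine x).hasDerivWithinAt.congr (fun z hz => h.rhat_of_le hz) (h.rhat_of_le le_rfl)
    have hright : HasDerivWithinAt (rhat f y₀ x) (deriv f x) (Set.Ici x) x :=
      (h.differentiable x).hasDerivAt.hasDerivWithinAt.congr (fun z hz => if_pos hz) (if_pos le_rfl)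
    have := hleft.union hright
    rwa [Set.Iic_union_Ici, hasDerivWithinAt_univ] at this
  · rw [rhatDeriv, if_pos hx.le]
    refine (h.differentiable x).hasDerivAt.congr_of_eventuallyEq ?_
    filter_upwards [eventually_gt_nhds hx] with z hz using if_pos hz.le

lemma differentiable_rhat (h : ConjHasDerivAt f t y₀) : Differentiable ℝ (rhat f y₀ t) :=
  fun x => (h.hasDerivAt_rhat x).differentiableAt

lemma continuous_rhat (h : ConjHasDerivAt f t y₀) : Continuous (rhat f y₀ t) :=
  h.differentiable_rhat.continuous

lemma convexOn_rhat (h : ConjHasDerivAt f t y₀) : ConvexOn ℝ Set.univ (rhat f y₀ t) := by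
  refine Monotone.convexOn_univ_of_deriv h.differentiable_rhat ?_
  rw [show deriv (rhat f y₀ t) = rhatDeriv f y₀ t from funext fun x => (h.hasDerivAt_rhat x).deriv]
  exact h.monotone_rhatDeriv

lemma rconj_rhatDeriv (h : ConjHasDerivAt f t y₀) (p : ℝ) :
    rconj f (rhatDeriv f y₀ t p) = ((p * rhatDeriv f y₀ t p - rhat f y₀ t p : ℝ) : EReal) := by
  unfold rhatDeriv rhat
  split_ifs
  · exact rconj_deriv h.convexOn h.differentiable p
  · rw [show p * y₀ - (y₀ * p - (rconj f y₀).toReal) = (rconj f y₀).toReal by ring,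
      coe_toReal_rconj h.rconj_ne_top]

end ConjHasDerivAt

section couplings

variable {n : ℕ} {μ ν : Fin n → ℝ}

lemma prod_mem_DCouplings (hμ : IsHistogram μ) (hν : IsHistogram ν) :
    (fun i j => μ i * ν j) ∈ DCouplings μ ν :=
  ⟨fun i j => mul_nonneg (hμ.1 i) (hν.1 j), fun i => by rw [← Finset.mul_sum, hν.2, mul_one],
    fun j => by rw [← Finset.sum_mul, hμ.2, one_mul]⟩

lemma convex_DCouplings (μ ν : Fin n → ℝ) : Convex ℝ (DCouplings μ ν) := by
  rintro π ⟨hπ₀, hπμ, hπν⟩ ρ ⟨hρ₀, hρμ, hρν⟩ a b ha hb hab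
  refine ⟨fun i j => ?_, fun i => ?_, fun j => ?_⟩
  · have := hπ₀ i j
    have := hρ₀ i j
    simp only [Pi.add_apply, Pi.smul_apply, smul_eq_mul]
    positivity
  · simp only [Pi.add_apply, Pi.smul_apply, smul_eq_mul, Finset.sum_add_distrib,
      ← Finset.mul_sum, hπμ, hρμ, ← add_mul, hab, one_mul]
  · simp only [Pi.add_apply, Pi.smul_apply, smul_eq_mul, Finset.sum_add_distrib,
      ← Finset.mul_sum, hπν, hρν, ← add_mul, hab, one_mul]

lemma le_one_of_mem_DCouplings (hμ : IsHistogram μ) {π : Fin n → Fin n → ℝ}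
    (hπ : π ∈ DCouplings μ ν) (i j : Fin n) : π i j ≤ 1 :=
  calc π i j ≤ ∑ j', π i j' := Finset.single_le_sum (fun j' _ => hπ.1 i j') (Finset.mem_univ j)
    _ = μ i := hπ.2.1 i
    _ ≤ ∑ i', μ i' := Finset.single_le_sum (fun i' _ => hμ.1 i') (Finset.mem_univ i)
    _ = 1 := hμ.2

lemma isCompact_DCouplings (hμ : IsHistogram μ) : IsCompact (DCouplings μ ν) := by
  have hclosed : IsClosed (DCouplings μ ν) := by
    simp only [DCouplings, Set.ofPred_and, Set.ofPred_forall]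
    exact (isClosed_iInter fun i => isClosed_iInter fun j => isClosed_le continuous_const
      (by fun_prop)).inter <|
      (isClosed_iInter fun i => isClosed_eq (by fun_prop) continuous_const).inter
        (isClosed_iInter fun j => isClosed_eq (by fun_prop) continuous_const)
  refine (isCompact_univ_pi fun _ => isCompact_univ_pi fun _ => isCompact_Icc).of_isClosed_subset
    hclosed fun π hπ i _ j _ => ⟨hπ.1 i j, le_one_of_mem_DCouplings hμ hπ i j⟩

end couplings

section transport

variable {n : ℕ} {μ ν : Fin n → ℝ}

lemma dOT_le_frob {c π : Fin n → Fin n → ℝ} (hc : ∀ i j, 0 ≤ c i j) (hπ : π ∈ DCouplings μ ν) :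
    dOT c μ ν ≤ frob c π := by
  refine ciInf_le ⟨0, ?_⟩ (⟨π, hπ⟩ : DCouplings μ ν)
  rintro _ ⟨ρ, rfl⟩
  exact Finset.sum_nonneg fun i _ => Finset.sum_nonneg fun j _ => mul_nonneg (hc i j) (ρ.2.1 i j)

lemma frob_le_frob_of_isMinOn {S : Set (Fin n → Fin n → ℝ)} (hS : Convex ℝ S)
    {g : Fin n → Fin n → ℝ → ℝ} {g' x y : Fin n → Fin n → ℝ}
    (hg : ∀ i j, HasDerivAt (g i j) (g' i j) (x i j))
    (hmin : IsMinOn (fun π => ∑ i, ∑ j, g i j (π i j)) S x) (hx : x ∈ S) (hy : y ∈ S) :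
    frob g' x ≤ frob g' y := by
  have hline : HasDerivAt (fun s : ℝ => ∑ i, ∑ j, g i j ((x + s • (y - x)) i j))
      (∑ i, ∑ j, g' i j * (y i j - x i j)) 0 := by
    refine HasDerivAt.fun_sum fun i _ => HasDerivAt.fun_sum fun j _ => ?_
    have hcoord : HasDerivAt (fun s : ℝ => x i j + s * (y i j - x i j)) (y i j - x i j) 0 := by
      simpa using ((hasDerivAt_id (0 : ℝ)).mul_const (y i j - x i j)).const_add (x i j)
    exact (hg i j).comp_of_eq (0 : ℝ) hcoord (by simp)
  have hmin' : IsMinOn (fun s : ℝ => ∑ i, ∑ j, g i j ((x + s • (y - x)) i j)) (Set.Icc 0 1) 0 :=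
    fun s hs => by simpa using hmin (hS.add_smul_sub_mem hx hy hs)
  have := nonneg_of_hasDerivAt_of_isMinOn_Icc hline hmin'
  simp only [mul_sub, Finset.sum_sub_distrib, sub_nonneg] at this
  exact this

lemma frob_sub_mul_sum_eq {ε : ℝ} (hε : ε ≠ 0) (c c₀ π F : Fin n → Fin n → ℝ) :
    frob c π - ε * ∑ i, ∑ j, (π i j * ((c i j - c₀ i j) / ε) - F i j)
      = frob c₀ π + ε * ∑ i, ∑ j, F i j := by
  simp only [frob, Finset.mul_sum, ← Finset.sum_sub_distrib, ← Finset.sum_add_distrib]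
  refine Finset.sum_congr rfl fun i _ => Finset.sum_congr rfl fun j _ => ?_
  field_simp
  ring

end transport

section duality

variable {n : ℕ} {μ ν : Fin n → ℝ} {c₀ t : Fin n → Fin n → ℝ} {ε : ℝ} {R : Fin n → Fin n → ℝ → ℝ}

noncomputable def adversarialValue (μ ν : Fin n → ℝ) (c₀ : Fin n → Fin n → ℝ) (ε : ℝ)
    (R : Fin n → Fin n → ℝ → ℝ) (c : Fin n → Fin n → ℝ) : EReal :=
  ((dOT c μ ν : ℝ) : EReal) - (ε : EReal) * ∑ i, ∑ j, rconj (R i j) ((c i j - c₀ i j) / ε)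

noncomputable def linearizedCost (c₀ : Fin n → Fin n → ℝ) (ε : ℝ) (R : Fin n → Fin n → ℝ → ℝ)
    (t π : Fin n → Fin n → ℝ) : ℝ :=
  frob c₀ π + ε * ∑ i, ∑ j, rhat (R i j) (-(c₀ i j) / ε) (t i j) (π i j)

noncomputable def optimalCost (c₀ : Fin n → Fin n → ℝ) (ε : ℝ) (R : Fin n → Fin n → ℝ → ℝ)
    (t π : Fin n → Fin n → ℝ) : Fin n → Fin n → ℝ :=
  fun i j => c₀ i j + ε * rhatDeriv (R i j) (-(c₀ i j) / ε) (t i j) (π i j)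

lemma linearizedCost_eq_sum (c₀ : Fin n → Fin n → ℝ) (ε : ℝ) (R : Fin n → Fin n → ℝ → ℝ)
    (t : Fin n → Fin n → ℝ) :
    linearizedCost c₀ ε R t = fun π => ∑ i, ∑ j,
      (c₀ i j * π i j + ε * rhat (R i j) (-(c₀ i j) / ε) (t i j) (π i j)) := by
  funext π
  simp only [linearizedCost, frob, Finset.mul_sum, Finset.sum_add_distrib]

lemma continuous_linearizedCost (hR : ∀ i j, ConjHasDerivAt (R i j) (t i j) (-(c₀ i j) / ε)) :
    Continuous (linearizedCost c₀ ε R t) := by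
  have := fun i j => (hR i j).continuous_rhat
  rw [linearizedCost_eq_sum]
  fun_prop

lemma adversarialValue_le_coe_sub {c L : Fin n → Fin n → ℝ} (hε : 0 < ε)
    (hL : ∀ i j, (L i j : EReal) ≤ rconj (R i j) ((c i j - c₀ i j) / ε)) :
    adversarialValue μ ν c₀ ε R c ≤ ((dOT c μ ν - ε * ∑ i, ∑ j, L i j : ℝ) : EReal) := by
  rw [EReal.coe_sub, EReal.coe_mul, EReal.coe_finset_sum]
  simp only [EReal.coe_finset_sum]
  exact EReal.sub_le_sub le_rfl (mul_le_mul_of_nonneg_left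
    (Finset.sum_le_sum fun i _ => Finset.sum_le_sum fun j _ => hL i j) (EReal.coe_nonneg.2 hε.le))

lemma adversarialValue_le_linearizedCost
    (hR : ∀ i j, ConjHasDerivAt (R i j) (t i j) (-(c₀ i j) / ε)) (hε : 0 < ε)
    {c π : Fin n → Fin n → ℝ} (hc : ∀ i j, 0 ≤ c i j) (hπ : π ∈ DCouplings μ ν) :
    adversarialValue μ ν c₀ ε R c ≤ linearizedCost c₀ ε R t π := by
  set F : Fin n → Fin n → ℝ := fun i j => rhat (R i j) (-(c₀ i j) / ε) (t i j) (π i j)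
  have hL : ∀ i j, ((π i j * ((c i j - c₀ i j) / ε) - F i j : ℝ) : EReal)
      ≤ rconj (R i j) ((c i j - c₀ i j) / ε) := fun i j =>
    mul_sub_rhat_le_rconj (hR i j).rconj_ne_top (hR i j).hasDerivAt
      (div_le_div_of_nonneg_right (by linarith [hc i j]) hε.le) _
  refine (adversarialValue_le_coe_sub hε hL).trans (EReal.coe_le_coe_iff.2 ?_)
  rw [linearizedCost, ← frob_sub_mul_sum_eq hε.ne' c c₀ π F]
  linarith [dOT_le_frob hc hπ]

lemma optimalCost_nonneg (hR : ∀ i j, ConjHasDerivAt (R i j) (t i j) (-(c₀ i j) / ε))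
    (hε : 0 < ε) (π : Fin n → Fin n → ℝ) (i j : Fin n) : 0 ≤ optimalCost c₀ ε R t π i j := by
  have := mul_le_mul_of_nonneg_left ((hR i j).le_rhatDeriv (π i j)) hε.le
  rw [mul_div_cancel₀ _ hε.ne'] at this
  simp only [optimalCost]
  linarith

lemma isMinOn_frob_optimalCost (hR : ∀ i j, ConjHasDerivAt (R i j) (t i j) (-(c₀ i j) / ε))
    {π : Fin n → Fin n → ℝ} (hπ : π ∈ DCouplings μ ν)
    (hmin : IsMinOn (linearizedCost c₀ ε R t) (DCouplings μ ν) π) :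
    IsMinOn (frob (optimalCost c₀ ε R t π)) (DCouplings μ ν) π := by
  rw [linearizedCost_eq_sum] at hmin
  refine fun ρ hρ => frob_le_frob_of_isMinOn (convex_DCouplings μ ν)
    (g := fun i j x => c₀ i j * x + ε * rhat (R i j) (-(c₀ i j) / ε) (t i j) x)
    (fun i j => ?_) hmin hπ hρ
  simpa [optimalCost] using ((hasDerivAt_id' (π i j)).const_mul (c₀ i j)).fun_add
    (((hR i j).hasDerivAt_rhat (π i j)).const_mul ε)

lemma adversarialValue_optimalCost (hR : ∀ i j, ConjHasDerivAt (R i j) (t i j) (-(c₀ i j) / ε))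
    (hε : 0 < ε) {π : Fin n → Fin n → ℝ} (hπ : π ∈ DCouplings μ ν)
    (hmin : IsMinOn (linearizedCost c₀ ε R t) (DCouplings μ ν) π) :
    adversarialValue μ ν c₀ ε R (optimalCost c₀ ε R t π) = linearizedCost c₀ ε R t π := by
  set c := optimalCost c₀ ε R t π
  set F : Fin n → Fin n → ℝ := fun i j => rhat (R i j) (-(c₀ i j) / ε) (t i j) (π i j)
  have hslope : ∀ i j, (c i j - c₀ i j) / ε = rhatDeriv (R i j) (-(c₀ i j) / ε) (t i j) (π i j) :=
    fun i j => by simp only [c, optimalCost, add_sub_cancel_left, mul_div_cancel_left₀ _ hε.ne']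
  have hdOT : dOT c μ ν = frob c π := (isMinOn_frob_optimalCost hR hπ hmin).iInf_eq hπ
  have hsum : ∑ i, ∑ j, rconj (R i j) ((c i j - c₀ i j) / ε)
      = ((∑ i, ∑ j, (π i j * ((c i j - c₀ i j) / ε) - F i j) : ℝ) : EReal) := by
    simp only [EReal.coe_finset_sum, hslope, (hR _ _).rconj_rhatDeriv, F]
  rw [adversarialValue, hsum, ← EReal.coe_mul, ← EReal.coe_sub, hdOT,
    frob_sub_mul_sum_eq hε.ne' c c₀ π F]
  rfl

end duality

/-- Constraining the adversarial cost to be nonnegative amounts to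
linearizing the (separable) regularizer at short range. -/
theorem stmt5 {n : ℕ} (μ ν : Fin n → ℝ) (hμ : IsHistogram μ) (hν : IsHistogram ν)
    (c₀ : Fin n → Fin n → ℝ) (ε : ℝ) (hε : 0 < ε)
    (R : Fin n → Fin n → ℝ → ℝ)
    (hconv : ∀ i j, ConvexOn ℝ Set.univ (R i j))
    (hdiff : ∀ i j, Differentiable ℝ (R i j))
    (t : Fin n → Fin n → ℝ)
    (hfin : ∀ i j, rconj (R i j) (-(c₀ i j) / ε) ≠ ⊤)
    (ht : ∀ i j, HasDerivAt (fun y => (rconj (R i j) y).toReal) (t i j) (-(c₀ i j) / ε)) :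
    (⨆ c : {c : Fin n → Fin n → ℝ // ∀ i j, 0 ≤ c i j},
        ((dOT c.1 μ ν : ℝ) : EReal)
          - (ε : EReal) * ∑ i, ∑ j, rconj (R i j) ((c.1 i j - c₀ i j) / ε))
      = ((⨅ π : DCouplings μ ν,
          (frob c₀ π.1 + ε * ∑ i, ∑ j, rhat (R i j) (-(c₀ i j) / ε) (t i j) (π.1 i j)) : ℝ) :
            EReal) ∧
    ∀ i j, Continuous (rhat (R i j) (-(c₀ i j) / ε) (t i j)) ∧
      ConvexOn ℝ Set.univ (rhat (R i j) (-(c₀ i j) / ε) (t i j)) := by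
  have hR i j : ConjHasDerivAt (R i j) (t i j) (-(c₀ i j) / ε) :=
    ⟨hconv i j, hdiff i j, hfin i j, ht i j⟩
  refine ⟨?_, fun i j => ⟨(hR i j).continuous_rhat, (hR i j).convexOn_rhat⟩⟩
  obtain ⟨π, hπ, hmin⟩ := (isCompact_DCouplings (ν := ν) hμ).exists_isMinOn
    ⟨_, prod_mem_DCouplings hμ hν⟩ (continuous_linearizedCost hR).continuousOn
  change ⨆ c : {c : Fin n → Fin n → ℝ // ∀ i j, 0 ≤ c i j}, adversarialValue μ ν c₀ ε R c.1
    = ((⨅ π : DCouplings μ ν, linearizedCost c₀ ε R t π.1 : ℝ) : EReal)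
  rw [hmin.iInf_eq hπ]
  refine le_antisymm (iSup_le fun c => adversarialValue_le_linearizedCost hR hε c.2 hπ) ?_
  rw [← adversarialValue_optimalCost hR hε hπ hmin]
  exact le_iSup (fun c : {c : Fin n → Fin n → ℝ // ∀ i j, 0 ≤ c i j} =>
    adversarialValue μ ν c₀ ε R c.1) ⟨_, optimalCost_nonneg hR hε π⟩
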